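/- Let u > 0 and a, b, d > 0 be real numbers with (a + d)u < 1 and (b + d)u < 1. Let f, g ∈ ℂ with f ≠ 0, and let c := |f|/h, s := (f/|f|)·conj(g)/h, r := (f/|f|)·h with h := sqrt(|f|² + |g|²) be the exact Givens rotation data for (f, g). Suppose ĉ = c(1 + θ_a), ŝ = s(1 + θ_b), r̂ = r(1 + θ_d) with real θ_a, θ_b, θ_d satisfying |θ_a| ≤ γ_a, |θ_b| ≤ γ_b, |θ_d| ≤ γ_d. Then |ĉ·r̂ - f| ≤ γ_{a+d}·|f| and |conj(ŝ)·r̂ - g| ≤ γ_{b+d}·|g|; i.e., the backward error of the computed rotation applied as Q̂^H(r̂, 0)^T relative to (f, g)^T is bounded componentwise by γ_{a+d} and γ_{b+d}. -/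

import Mathlib

/-!
The exact data satisfy `c r = f` and `conj s · r = g`, and the perturbations are real factors,
which conjugation leaves alone; so the computed products are `f (1 + θ_a)(1 + θ_d)` and
`g (1 + θ_b)(1 + θ_d)`. The relative errors are therefore
`|(1 + θ)(1 + θ_d) - 1| ≤ γ_x + γ_d + γ_x γ_d`, and this is at most `γ_{x+d}` because
`(1 - xu)(1 - du) ≥ 1 - (x + d)u`.
-/

open ComplexConjugate

/-- `gamma (y * u)` is the rounding-error constant `γ_y`. -/
noncomputable def gamma (t : ℝ) : ℝ := t / (1 - t)

lemma gamma_nonneg {t : ℝ} (h₀ : 0 ≤ t) (h₁ : t < 1) : 0 ≤ gamma t :=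
  div_nonneg h₀ (sub_nonneg.2 h₁.le)

lemma one_add_gamma {t : ℝ} (ht : t < 1) : 1 + gamma t = (1 - t)⁻¹ := by
  have : 1 - t ≠ 0 := (sub_pos.2 ht).ne'
  rw [gamma]
  field_simp
  ring

lemma gamma_add_add_mul_le {x y : ℝ} (hx : 0 ≤ x) (hy : 0 ≤ y) (hxy : x + y < 1) :
    gamma x + gamma y + gamma x * gamma y ≤ gamma (x + y) := by
  have hx₁ : x < 1 := by linarith
  have hy₁ : y < 1 := by linarith
  have hprod : 1 - (x + y) ≤ (1 - x) * (1 - y) := by nlinarith [mul_nonneg hx hy]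
  suffices (1 + gamma x) * (1 + gamma y) ≤ 1 + gamma (x + y) by linarith
  rw [one_add_gamma hx₁, one_add_gamma hy₁, one_add_gamma hxy, ← mul_inv]
  exact inv_anti₀ (sub_pos.2 hxy) hprod

lemma abs_one_add_mul_one_add_sub_one_le {x y θ η : ℝ} (hx : 0 ≤ x) (hy : 0 ≤ y)
    (hxy : x + y < 1) (hθ : |θ| ≤ gamma x) (hη : |η| ≤ gamma y) :
    |(1 + θ) * (1 + η) - 1| ≤ gamma (x + y) :=
  calc |(1 + θ) * (1 + η) - 1| = |θ + η + θ * η| := by ring_nf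
    _ ≤ |θ| + |η| + |θ| * |η| := by
        rw [← abs_mul]
        exact (abs_add_le _ _).trans (add_le_add_left (abs_add_le _ _) _)
    _ ≤ gamma x + gamma y + gamma x * gamma y := by
        gcongr
        exact gamma_nonneg hx (by linarith)
    _ ≤ gamma (x + y) := gamma_add_add_mul_le hx hy hxy

lemma norm_mul_ofReal_mul_mul_ofReal_sub (z w : ℂ) (α β : ℝ) :
    ‖z * α * (w * β) - z * w‖ = |α * β - 1| * ‖z * w‖ := by
  rw [show z * α * (w * β) - z * w = ((α * β - 1 : ℝ) : ℂ) * (z * w) by push_cast; ring,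
    norm_mul, Complex.norm_real, Real.norm_eq_abs]

lemma givens_cos_mul_r {f : ℂ} (hf : f ≠ 0) {h : ℝ} (hh : h ≠ 0) :
    ((‖f‖ / h : ℝ) : ℂ) * (f / ‖f‖ * h) = f := by
  have : (‖f‖ : ℂ) ≠ 0 := by exact_mod_cast norm_ne_zero_iff.2 hf
  have : (h : ℂ) ≠ 0 := by exact_mod_cast hh
  push_cast
  field_simp

lemma givens_conj_sin_mul_r {f : ℂ} (hf : f ≠ 0) (g : ℂ) {h : ℝ} (hh : h ≠ 0) :
    conj (f / ‖f‖ * conj g / h) * (f / ‖f‖ * h) = g := by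
  have hnorm : (‖f‖ : ℂ) ≠ 0 := by exact_mod_cast norm_ne_zero_iff.2 hf
  have hh' : (h : ℂ) ≠ 0 := by exact_mod_cast hh
  have hconj : conj f * f = (‖f‖ : ℂ) ^ 2 := by
    rw [mul_comm, Complex.mul_conj, Complex.normSq_eq_norm_sq]
    push_cast
    rfl
  simp only [map_div₀, map_mul, Complex.conj_conj, Complex.conj_ofReal]
  field_simp
  linear_combination g * hconj

/-- Backward error of a computed Givens rotation: if `ĉ = c(1 + θ_a)`, `ŝ = s(1 + θ_b)`,
`r̂ = r(1 + θ_d)` with `|θ_a| ≤ γ a`, `|θ_b| ≤ γ b`, `|θ_d| ≤ γ d`, where `c, s, r` are the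
exact Givens data for `(f, g)` with `f ≠ 0`, then `|ĉ·r̂ - f| ≤ γ (a+d)·|f|` and
`|conj ŝ·r̂ - g| ≤ γ (b+d)·|g|`, where `γ y = y*u/(1 - y*u)`. -/
theorem givens_backward_error (u a b d : ℝ) (hu : 0 < u) (ha : 0 < a) (hb : 0 < b)
    (hd : 0 < d) (had : (a + d) * u < 1) (hbd : (b + d) * u < 1)
    (f g : ℂ) (hf : f ≠ 0)
    (θa θb θd : ℝ) (hθa : |θa| ≤ a * u / (1 - a * u)) (hθb : |θb| ≤ b * u / (1 - b * u))
    (hθd : |θd| ≤ d * u / (1 - d * u)) :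
    let h : ℝ := Real.sqrt (‖f‖ ^ 2 + ‖g‖ ^ 2)
    let c : ℝ := ‖f‖ / h
    let s : ℂ := f / (‖f‖ : ℂ) * (starRingEnd ℂ g) / (h : ℂ)
    let r : ℂ := f / (‖f‖ : ℂ) * (h : ℂ)
    ‖((c * (1 + θa) : ℝ) : ℂ) * (r * ((1 + θd : ℝ) : ℂ)) - f‖ ≤
      (a + d) * u / (1 - (a + d) * u) * ‖f‖ ∧
    ‖(starRingEnd ℂ (s * ((1 + θb : ℝ) : ℂ))) * (r * ((1 + θd : ℝ) : ℂ)) - g‖ ≤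
      (b + d) * u / (1 - (b + d) * u) * ‖g‖ := by
  intro h c s r
  have hh : h ≠ 0 :=
    (Real.sqrt_pos.2 (add_pos_of_pos_of_nonneg (by positivity) (sq_nonneg _))).ne'
  have hcr : (c : ℂ) * r = f := givens_cos_mul_r hf hh
  have hsr : conj s * r = g := givens_conj_sin_mul_r hf g hh
  have relative_error : ∀ {k θ : ℝ}, 0 < k → (k + d) * u < 1 → |θ| ≤ k * u / (1 - k * u) →
      |(1 + θ) * (1 + θd) - 1| ≤ (k + d) * u / (1 - (k + d) * u) := fun hk hkd hθ => by
    rw [add_mul] at hkd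
    have := abs_one_add_mul_one_add_sub_one_le (by positivity) (by positivity) hkd hθ hθd
    rwa [gamma, ← add_mul] at this
  constructor
  · rw [Complex.ofReal_mul, ← hcr, norm_mul_ofReal_mul_mul_ofReal_sub, hcr]
    exact mul_le_mul_of_nonneg_right (relative_error ha had hθa) (norm_nonneg f)
  · rw [map_mul, Complex.conj_ofReal, ← hsr, norm_mul_ofReal_mul_mul_ofReal_sub, hsr]
    exact mul_le_mul_of_nonneg_right (relative_error hb hbd hθb) (norm_nonneg g)
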